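/- arXiv:2211.11069 — 2 statements merged into one kernel-verified Lean document; each statement's English description precedes it below -/
import Mathlib

section
/- Suppose the hypothesis space H is a convex set of functions ψ : [0,R] → ℝ satisfying the coercivity condition with constant c_H > 0, i.e., (1/N_e) ∫ ‖F_{ψ₁−ψ₂}(x)‖² π(dx) ≥ c_H ‖ψ₁ − ψ₂‖²_{L²*_ρ} for all ψ₁, ψ₂ ∈ H, and suppose φ̂ ∈ H minimizes the expected error E over H. Then for every ψ ∈ H, c_H ‖ψ − φ̂‖²_{L²*_ρ} ≤ E(ψ) − E(φ̂). In particular, the minimizer of E over H is unique up to ‖·‖_{L²*_ρ}-null differences. (Inequality (34) of the paper and the uniqueness of the expected estimator.) -/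
/-!
Put `e(ψ) := F_ψ - F_φ`, an element of `L²(π)`. Then `N_e E(ψ) = ‖e(ψ)‖² + σ²`, and `e` is affine,
so it maps the convex set `H` onto a convex set `K ⊆ L²(π)` on which `e(φ̂)` has least norm.
The variational inequality of this projection of `0` onto `K`, `⟪e(φ̂), e(ψ) - e(φ̂)⟫ ≥ 0`, turns
`‖e(ψ)‖² = ‖e(φ̂)‖² + 2⟪e(φ̂), e(ψ) - e(φ̂)⟫ + ‖e(ψ) - e(φ̂)‖²` into
`‖F_{ψ-φ̂}‖² = ‖e(ψ) - e(φ̂)‖² ≤ N_e (E(ψ) - E(φ̂))`, and coercivity bounds the left side below.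
For a second minimizer `ψ` the right side is `≤ 0`, whence uniqueness.
-/

open scoped BigOperators
open MeasureTheory

noncomputable section

abbrev Vd (d : ℕ) := EuclideanSpace ℝ (Fin d)
abbrev St (n d : ℕ) := EuclideanSpace ℝ (Fin n × Fin d)

def blk {n d : ℕ} (x : St n d) (i : Fin n) : Vd d :=
  (WithLp.equiv 2 (Fin d → ℝ)).symm fun a => x (i, a)

def rdist {n d : ℕ} (x : St n d) (i j : Fin n) : ℝ := ‖blk x j - blk x i‖

def Fcoup {n d : ℕ} (k : Fin n → Fin n → ℝ) (ψ : ℝ → ℝ) (y : St n d) : St n d :=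
  (WithLp.equiv 2 (Fin n × Fin d → ℝ)).symm fun p =>
    ∑ j, k p.1 j * ψ (rdist y p.1 j) * (y (j, p.2) - y (p.1, p.2))

open Classical in
def edgeFinset {n : ℕ} (k : Fin n → Fin n → ℝ) : Finset (Fin n × Fin n) :=
  Finset.univ.filter fun p => p.1 < p.2 ∧ 0 < k p.1 p.2

/-- `‖ψ‖²_{L²*_ρ}`, with `ρ` the edge-distance distribution under `π`. -/
def rhoNormSq {n d : ℕ} (k : Fin n → Fin n → ℝ) (π : Measure (St n d)) (ψ : ℝ → ℝ) : ℝ :=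
  (((edgeFinset k).card : ℝ))⁻¹ *
    ∑ p ∈ edgeFinset k, ∫ x, (ψ (rdist x p.1 p.2) * rdist x p.1 p.2) ^ 2 ∂π

/-- The expected error `E(ψ) = (1/N_e)(∫ ‖F_{ψ-φ}‖² dπ + σ²)`. -/
def expErr {n d : ℕ} (k : Fin n → Fin n → ℝ) (φ : ℝ → ℝ) (σ : ℝ)
    (π : Measure (St n d)) (ψ : ℝ → ℝ) : ℝ :=
  (((edgeFinset k).card : ℝ))⁻¹ * ((∫ x, ‖Fcoup k ψ x - Fcoup k φ x‖ ^ 2 ∂π) + σ ^ 2)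


theorem norm_sub_sq_le_of_isMinOn_norm {F : Type*} [NormedAddCommGroup F] [InnerProductSpace ℝ F]
    {K : Set F} (hK : Convex ℝ K) {v w : F} (hv : v ∈ K) (hmin : IsMinOn (‖·‖) K v) (hw : w ∈ K) :
    ‖w - v‖ ^ 2 ≤ ‖w‖ ^ 2 - ‖v‖ ^ 2 := by
  have : Nonempty K := ⟨⟨v, hv⟩⟩
  have hinf : ‖0 - v‖ = ⨅ w : K, ‖0 - (w : F)‖ :=
    le_antisymm (le_ciInf fun w => by simpa using isMinOn_iff.1 hmin w w.2)
      (ciInf_le ⟨0, Set.forall_mem_range.2 fun _ => norm_nonneg _⟩ (⟨v, hv⟩ : K))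
  have hvar := (norm_eq_iInf_iff_real_inner_le_zero hK hv).1 hinf w hw
  rw [zero_sub, inner_neg_left, neg_nonpos] at hvar
  have hpyth : ‖w‖ ^ 2 = ‖v‖ ^ 2 + 2 * inner ℝ v (w - v) + ‖w - v‖ ^ 2 := by
    rw [← norm_add_sq_real, add_sub_cancel]
  linarith

namespace MeasureTheory.Lp

variable {α E : Type*} [MeasurableSpace α] {μ : Measure α} [NormedAddCommGroup E]

theorem convex_setOf_ae_eq [NormedSpace ℝ E] {p : ENNReal} {S : Set (α → E)} (hS : Convex ℝ S) :
    Convex ℝ {u : Lp E p μ | ∃ f ∈ S, u =ᵐ[μ] f} := by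
  rintro u ⟨f, hf, hu⟩ v ⟨g, hg, hv⟩ a b ha hb hab
  refine ⟨a • f + b • g, hS hf hg ha hb hab, ?_⟩
  filter_upwards [Lp.coeFn_add (a • u) (b • v), Lp.coeFn_smul a u, Lp.coeFn_smul b v, hu, hv]
    with x hadd hsu hsv hux hvx
  rw [hadd, Pi.add_apply, hsu, hsv, Pi.smul_apply, Pi.smul_apply, hux, hvx]
  rfl

theorem norm_sq_eq_integral [InnerProductSpace ℝ E] (f : Lp E 2 μ) :
    ‖f‖ ^ 2 = ∫ a, ‖f a‖ ^ 2 ∂μ := by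
  simp only [← real_inner_self_eq_norm_sq, L2.inner_def]

end MeasureTheory.Lp

section

variable {n d : ℕ} {k : Fin n → Fin n → ℝ}

lemma Fcoup_sub (ψ₁ ψ₂ : ℝ → ℝ) (x : St n d) :
    Fcoup k (fun r => ψ₁ r - ψ₂ r) x = Fcoup k ψ₁ x - Fcoup k ψ₂ x := by
  ext p
  simp only [Fcoup, WithLp.equiv_symm_apply, PiLp.toLp_apply, PiLp.sub_apply,
    ← Finset.sum_sub_distrib]
  exact Finset.sum_congr rfl fun j _ => by ring

lemma Fcoup_smul_add_smul (ψ₁ ψ₂ : ℝ → ℝ) (a b : ℝ) (x : St n d) :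
    Fcoup k (a • ψ₁ + b • ψ₂) x = a • Fcoup k ψ₁ x + b • Fcoup k ψ₂ x := by
  ext p
  simp only [Fcoup, WithLp.equiv_symm_apply, PiLp.toLp_apply, PiLp.add_apply, PiLp.smul_apply,
    smul_eq_mul, Finset.mul_sum, ← Finset.sum_add_distrib, Pi.add_apply, Pi.smul_apply]
  exact Finset.sum_congr rfl fun j _ => by ring

lemma convex_image_Fcoup_sub {H : Set (ℝ → ℝ)} (hH : Convex ℝ H) (φ : ℝ → ℝ) :
    Convex ℝ ((fun ψ x => Fcoup k ψ x - Fcoup k φ x : (ℝ → ℝ) → St n d → St n d) '' H) := by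
  rintro _ ⟨ψ₁, hψ₁, rfl⟩ _ ⟨ψ₂, hψ₂, rfl⟩ a b ha hb hab
  refine ⟨a • ψ₁ + b • ψ₂, hH hψ₁ hψ₂ ha hb hab, funext fun x => ?_⟩
  simp only [Fcoup_smul_add_smul, Pi.add_apply, Pi.smul_apply]
  linear_combination (norm := module) hab • Fcoup k φ x

lemma rhoNormSq_nonneg (π : Measure (St n d)) (ψ : ℝ → ℝ) : 0 ≤ rhoNormSq k π ψ :=
  mul_nonneg (by positivity) (Finset.sum_nonneg fun _ _ => integral_nonneg fun _ => sq_nonneg _)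

variable {φ : ℝ → ℝ} {σ : ℝ} {π : Measure (St n d)}

lemma expErr_eq_of_ae_eq {ψ : ℝ → ℝ} {u : Lp (St n d) 2 π}
    (hu : u =ᵐ[π] fun x => Fcoup k ψ x - Fcoup k φ x) :
    expErr k φ σ π ψ = ((edgeFinset k).card : ℝ)⁻¹ * (‖u‖ ^ 2 + σ ^ 2) := by
  rw [expErr, Lp.norm_sq_eq_integral,
    integral_congr_ae (hu.mono fun x hx => congrArg (‖·‖ ^ 2) hx.symm)]

theorem integral_sq_le_expErr_sub_of_isMinOn {H : Set (ℝ → ℝ)} (hH : Convex ℝ H)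
    (hmem : ∀ ψ ∈ H, MemLp (fun x => Fcoup k ψ x - Fcoup k φ x) 2 π) {φhat ψ : ℝ → ℝ}
    (hφhat : φhat ∈ H) (hmin : IsMinOn (expErr k φ σ π) H φhat) (hψ : ψ ∈ H) :
    ((edgeFinset k).card : ℝ)⁻¹ * ∫ x, ‖Fcoup k (fun r => ψ r - φhat r) x‖ ^ 2 ∂π ≤
      expErr k φ σ π ψ - expErr k φ σ π φhat := by
  set K := {u : Lp (St n d) 2 π |
    ∃ f ∈ (fun ψ x => Fcoup k ψ x - Fcoup k φ x : (ℝ → ℝ) → St n d → St n d) '' H, u =ᵐ[π] f}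
  have hK : Convex ℝ K := Lp.convex_setOf_ae_eq (convex_image_Fcoup_sub hH φ)
  set u := (hmem ψ hψ).toLp
  set v := (hmem φhat hφhat).toLp
  have hv : v ∈ K := ⟨_, ⟨φhat, hφhat, rfl⟩, (hmem φhat hφhat).coeFn_toLp⟩
  have hu : u ∈ K := ⟨_, ⟨ψ, hψ, rfl⟩, (hmem ψ hψ).coeFn_toLp⟩
  have huv : ∫ x, ‖Fcoup k (fun r => ψ r - φhat r) x‖ ^ 2 ∂π = ‖u - v‖ ^ 2 := by
    rw [Lp.norm_sq_eq_integral]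
    refine integral_congr_ae ?_
    filter_upwards [Lp.coeFn_sub u v, (hmem ψ hψ).coeFn_toLp, (hmem φhat hφhat).coeFn_toLp]
      with x hsub hux hvx
    rw [hsub, Pi.sub_apply, hux, hvx, sub_sub_sub_cancel_right, Fcoup_sub]
  rw [huv, expErr_eq_of_ae_eq (hmem ψ hψ).coeFn_toLp,
    expErr_eq_of_ae_eq (hmem φhat hφhat).coeFn_toLp]
  rcases (inv_nonneg.2 (Nat.cast_nonneg (edgeFinset k).card : (0 : ℝ) ≤ _)).eq_or_lt with hN | hN
  · simp [← hN] -- no edges: `(0 : ℝ)⁻¹ = 0` and both sides vanish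
  have hvmin : IsMinOn (‖·‖) K v := by
    refine isMinOn_iff.2 ?_
    rintro w ⟨_, ⟨ψ', hψ', rfl⟩, hw⟩
    have hE := isMinOn_iff.1 hmin ψ' hψ'
    rw [expErr_eq_of_ae_eq hw, expErr_eq_of_ae_eq (hmem φhat hφhat).coeFn_toLp] at hE
    exact (pow_le_pow_iff_left₀ (norm_nonneg _) (norm_nonneg _) two_ne_zero).1
      ((add_le_add_iff_right _).1 (le_of_mul_le_mul_left hE hN))
  calc _ ≤ _ := mul_le_mul_of_nonneg_left (norm_sub_sq_le_of_isMinOn_norm hK hv hvmin hu) hN.le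
    _ = _ := by ring

end

theorem statement12_general {n d : ℕ} (k : Fin n → Fin n → ℝ) (φ : ℝ → ℝ) (σ : ℝ)
    (π : Measure (St n d))
    (H : Set (ℝ → ℝ)) (hconv : Convex ℝ H)
    (hmem : ∀ ψ ∈ H, MemLp (fun x => Fcoup k ψ x - Fcoup k φ x) 2 π)
    (cH : ℝ) (hcH : 0 < cH)
    (hcoer : ∀ ψ₁ ∈ H, ∀ ψ₂ ∈ H,
      cH * rhoNormSq k π (fun r => ψ₁ r - ψ₂ r) ≤
        ((edgeFinset k).card : ℝ)⁻¹ * ∫ x, ‖Fcoup k (fun r => ψ₁ r - ψ₂ r) x‖ ^ 2 ∂π)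
    (φhat : ℝ → ℝ) (hφhat : φhat ∈ H)
    (hmin : ∀ ψ ∈ H, expErr k φ σ π φhat ≤ expErr k φ σ π ψ) :
    (∀ ψ ∈ H, cH * rhoNormSq k π (fun r => ψ r - φhat r) ≤
        expErr k φ σ π ψ - expErr k φ σ π φhat) ∧
      (∀ φhat' ∈ H, (∀ ψ ∈ H, expErr k φ σ π φhat' ≤ expErr k φ σ π ψ) →
        rhoNormSq k π (fun r => φhat' r - φhat r) = 0) := by
  have hgap : ∀ ψ ∈ H, cH * rhoNormSq k π (fun r => ψ r - φhat r) ≤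
      expErr k φ σ π ψ - expErr k φ σ π φhat := fun ψ hψ =>
    (hcoer ψ hψ φhat hφhat).trans <|
      integral_sq_le_expErr_sub_of_isMinOn hconv hmem hφhat (isMinOn_iff.2 hmin) hψ
  refine ⟨hgap, fun φhat' hφhat' hmin' => le_antisymm ?_ (rhoNormSq_nonneg π _)⟩
  exact nonpos_of_mul_nonpos_right
    ((hgap φhat' hφhat').trans (sub_nonpos.2 (hmin' φhat hφhat))) hcH

/-- If `H` is convex and coercive with constant `c_H > 0`, and
`φ̂ ∈ H` minimizes `E` over `H`, then `c_H ‖ψ - φ̂‖²_{L²*_ρ} ≤ E(ψ) - E(φ̂)` for every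
`ψ ∈ H`; in particular the minimizer is unique up to `‖·‖_{L²*_ρ}`-null differences. -/
theorem statement12 {n d : ℕ} (k : Fin n → Fin n → ℝ) (φ : ℝ → ℝ) (σ R : ℝ)
    (hσ : 0 ≤ σ) (hR : 0 < R)
    (π : Measure (St n d)) [IsProbabilityMeasure π]
    (hπR : ∀ p ∈ edgeFinset k, ∀ᵐ x ∂π, rdist x p.1 p.2 ≤ R)
    (H : Set (ℝ → ℝ)) (hconv : Convex ℝ H)
    (hmem : ∀ ψ ∈ H, MemLp (fun x => Fcoup k ψ x - Fcoup k φ x) 2 π)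
    (cH : ℝ) (hcH : 0 < cH)
    (hcoer : ∀ ψ₁ ∈ H, ∀ ψ₂ ∈ H,
      cH * rhoNormSq k π (fun r => ψ₁ r - ψ₂ r) ≤
        ((edgeFinset k).card : ℝ)⁻¹ * ∫ x, ‖Fcoup k (fun r => ψ₁ r - ψ₂ r) x‖ ^ 2 ∂π)
    (φhat : ℝ → ℝ) (hφhat : φhat ∈ H)
    (hmin : ∀ ψ ∈ H, expErr k φ σ π φhat ≤ expErr k φ σ π ψ) :
    (∀ ψ ∈ H, cH * rhoNormSq k π (fun r => ψ r - φhat r) ≤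
        expErr k φ σ π ψ - expErr k φ σ π φhat) ∧
      (∀ φhat' ∈ H, (∀ ψ ∈ H, expErr k φ σ π φhat' ≤ expErr k φ σ π ψ) →
        rhoNormSq k π (fun r => φhat' r - φhat r) = 0) :=
  statement12_general k φ σ π H hconv hmem cH hcH hcoer φhat hφhat hmin

end
end

section
/- Let (V, ‖·‖) be a normed space, H ⊆ V, and D, D_T : H → ℝ with D(ψ) ≥ 0 for all ψ ∈ H. Let ε > 0, 0 < α < 1, c > 0, and let ψ₁, ψ₂ ∈ H with ‖ψ₁ − ψ₂‖ ≤ αε/c. Assume the Lipschitz bounds |(D − D_T)(ψ₂) − (D − D_T)(ψ₁)| ≤ c‖ψ₁ − ψ₂‖ and D(ψ₁) ≤ D(ψ₂) + ε. If D(ψ₁) − D_T(ψ₁) ≤ α(D(ψ₁) + ε), then D(ψ₂) − D_T(ψ₂) ≤ 3α(D(ψ₂) + ε). (The deterministic covering-transfer step established in the proof of Proposition 2: the ratio (D − D_T)/(D + ε) increases by at most a factor of 3 when moving within an (αε/c)-ball.) -/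
/-!
STATEMENT 16 (deterministic covering-transfer step from the proof of Proposition 2).
-/

noncomputable section

/-- Let `(V, ‖·‖)` be a normed space, `H ⊆ V`, `D, D_T : H → ℝ` with
`D ≥ 0` on `H`.  If `‖ψ₁ - ψ₂‖ ≤ αε/c`, the Lipschitz bound
`|(D - D_T)(ψ₂) - (D - D_T)(ψ₁)| ≤ c‖ψ₁ - ψ₂‖` holds, `D(ψ₁) ≤ D(ψ₂) + ε`, and
`D(ψ₁) - D_T(ψ₁) ≤ α(D(ψ₁) + ε)`, then `D(ψ₂) - D_T(ψ₂) ≤ 3α(D(ψ₂) + ε)`. -/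
theorem statement16 {V : Type*} [NormedAddCommGroup V] [NormedSpace ℝ V]
    (H : Set V) (D DT : V → ℝ) (hD : ∀ ψ ∈ H, 0 ≤ D ψ)
    (ε α c : ℝ) (hε : 0 < ε) (hα : 0 < α) (hα1 : α < 1) (hc : 0 < c)
    (ψ₁ ψ₂ : V) (hψ₁ : ψ₁ ∈ H) (hψ₂ : ψ₂ ∈ H)
    (hclose : ‖ψ₁ - ψ₂‖ ≤ α * ε / c)
    (hlip : |(D ψ₂ - DT ψ₂) - (D ψ₁ - DT ψ₁)| ≤ c * ‖ψ₁ - ψ₂‖)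
    (hDle : D ψ₁ ≤ D ψ₂ + ε)
    (hmain : D ψ₁ - DT ψ₁ ≤ α * (D ψ₁ + ε)) :
    D ψ₂ - DT ψ₂ ≤ 3 * α * (D ψ₂ + ε) := by
  have h1 : c * ‖ψ₁ - ψ₂‖ ≤ α * ε := by
    have := mul_le_mul_of_nonneg_left hclose hc.le
    rwa [mul_div_cancel₀ _ hc.ne'] at this
  have h2 := abs_le.mp hlip
  have hD2 := hD ψ₂ hψ₂
  nlinarith [h2.2]

end
end
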